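/- Let k, m be integers with -N ≤ k, m ≤ 0 and k ≠ m, and set centers c_k = 2^{|k|+2N} e₁, c_m = 2^{|m|+2N} e₁ in ℝ². Then ‖ (1 + 2^k|x - c_k|)^{-1} (1 + 2^m|x - c_m|)^{-1} ‖_{L⁴(ℝ²)} ≤ C 2^{-2N} 2^{-(k+m)/2} for an absolute constant C. -/

import Mathlib

open MeasureTheory
noncomputable section

abbrev R2 := EuclideanSpace ℝ (Fin 2)

def e1 : R2 := EuclideanSpace.single 0 1

/-- The center `c_j = 2^{|j|+2N} e₁`. -/
def center (N : ℕ) (j : ℤ) : R2 := (2:ℝ) ^ (|j| + 2 * (N:ℤ)) • e1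

namespace Stmt6Aux

open ENNReal

/-- The base integral `∫ (1+‖y‖)^{-4}` over `ℝ²`. -/
def Ibase : ℝ≥0∞ := ∫⁻ y : R2, ENNReal.ofReal ((1 + ‖y‖) ^ (-(4:ℝ)))

lemma Ibase_lt_top : Ibase < ∞ := by
  apply finite_integral_one_add_norm (E := R2) (μ := volume) (r := 4)
  simp
  norm_num

lemma measurable_F : Measurable fun y : R2 => ENNReal.ofReal ((1 + ‖y‖) ^ (-(4:ℝ))) := by
  fun_prop

/-- Scaling and translation of the base lintegral. -/
lemma lint_scale (c : R2) {t : ℝ} (ht : 0 < t) :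
    ∫⁻ x : R2, ENNReal.ofReal ((1 + t * ‖x - c‖) ^ (-(4:ℝ)))
      = ENNReal.ofReal ((t ^ 2)⁻¹) * Ibase := by
  have h1 : ∀ x : R2, ENNReal.ofReal ((1 + t * ‖x - c‖) ^ (-(4:ℝ)))
      = (fun y : R2 => ENNReal.ofReal ((1 + ‖y - t • c‖) ^ (-(4:ℝ)))) (t • x) := by
    intro x
    have : ‖t • x - t • c‖ = t * ‖x - c‖ := by
      rw [← smul_sub, norm_smul, Real.norm_eq_abs, abs_of_pos ht]
    simp [this]
  calc ∫⁻ x : R2, ENNReal.ofReal ((1 + t * ‖x - c‖) ^ (-(4:ℝ)))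
      = ∫⁻ x : R2, (fun y : R2 => ENNReal.ofReal ((1 + ‖y - t • c‖) ^ (-(4:ℝ)))) (t • x) := by
        exact lintegral_congr h1
    _ = ∫⁻ y : R2, ENNReal.ofReal ((1 + ‖y - t • c‖) ^ (-(4:ℝ))) ∂(Measure.map (t • ·) volume) := by
        rw [lintegral_map (by fun_prop) (measurable_const_smul t)]
    _ = ENNReal.ofReal ((t ^ 2)⁻¹) * ∫⁻ y : R2, ENNReal.ofReal ((1 + ‖y - t • c‖) ^ (-(4:ℝ))) := by
        rw [Measure.map_addHaar_smul volume ht.ne', lintegral_smul_measure]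
        congr 2
        · rw [abs_of_nonneg (by positivity)]
          norm_num [R2]
    _ = ENNReal.ofReal ((t ^ 2)⁻¹) * Ibase := by
        rw [lintegral_sub_right_eq_self (fun y : R2 => ENNReal.ofReal ((1 + ‖y‖) ^ (-(4:ℝ)))) (t • c)]
        rfl

/-- eLpNorm of a single factor. -/
lemma elp_single (c : R2) {t : ℝ} (ht : 0 < t) :
    eLpNorm (fun x : R2 => (1 + t * ‖x - c‖)⁻¹) 4 volume
      = ENNReal.ofReal (t ^ (-(2:ℝ)⁻¹)) * Ibase ^ ((4:ℝ)⁻¹) := by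
  have hpos : ∀ x : R2, 0 < 1 + t * ‖x - c‖ := fun x => by positivity
  rw [eLpNorm_eq_lintegral_rpow_enorm_toReal (by norm_num) (by norm_num)]
  have htr : (4 : ℝ≥0∞).toReal = (4:ℝ) := by norm_num
  rw [htr]
  have hint : ∀ x : R2, (‖(1 + t * ‖x - c‖)⁻¹‖ₑ) ^ (4:ℝ)
      = ENNReal.ofReal ((1 + t * ‖x - c‖) ^ (-(4:ℝ))) := by
    intro x
    have h0 : 0 < (1 + t * ‖x - c‖)⁻¹ := by positivity
    rw [Real.enorm_eq_ofReal h0.le, ENNReal.ofReal_rpow_of_pos h0,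
      Real.inv_rpow (hpos x).le, Real.rpow_neg (hpos x).le]
  rw [lintegral_congr hint, lint_scale c ht]
  rw [ENNReal.mul_rpow_of_nonneg _ _ (by norm_num : (0:ℝ) ≤ 1/4)]
  congr 1
  · rw [ENNReal.ofReal_rpow_of_pos (by positivity)]
    congr 1
    rw [← Real.rpow_natCast t 2, ← Real.rpow_neg ht.le, ← Real.rpow_mul ht.le]
    norm_num
  · norm_num


lemma Ibase_rpow_le :
    Ibase ^ ((4:ℝ)⁻¹) ≤ ENNReal.ofReal (Ibase.toReal ^ ((4:ℝ)⁻¹) + 1) := by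
  have h : Ibase = ENNReal.ofReal Ibase.toReal := (ENNReal.ofReal_toReal Ibase_lt_top.ne).symm
  calc Ibase ^ ((4:ℝ)⁻¹) = ENNReal.ofReal Ibase.toReal ^ ((4:ℝ)⁻¹) := by rw [← h]
    _ = ENNReal.ofReal (Ibase.toReal ^ ((4:ℝ)⁻¹)) :=
        ENNReal.ofReal_rpow_of_nonneg ENNReal.toReal_nonneg (by norm_num)
    _ ≤ _ := ENNReal.ofReal_le_ofReal (by linarith)

lemma zpow_sep {a b : ℤ} (h : b < a) : (2:ℝ) ^ (a - 1) ≤ (2:ℝ) ^ a - (2:ℝ) ^ b := by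
  have hb : (2:ℝ) ^ b ≤ (2:ℝ) ^ (a - 1) :=
    zpow_le_zpow_right₀ (by norm_num) (by omega)
  have ha : (2:ℝ) ^ a = (2:ℝ) ^ (a - 1) * 2 := by
    rw [← zpow_add_one₀ (by norm_num : (2:ℝ) ≠ 0)]
    congr 1; omega
  linarith

end Stmt6Aux
/-- For distinct indices `k ≠ m` in `[-N, 0]`,
`‖(1+2^k|x-c_k|)^{-1}(1+2^m|x-c_m|)^{-1}‖_{L⁴(ℝ²)} ≤ C 2^{-2N} 2^{-(k+m)/2}`. -/
theorem stmt6 :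
    ∃ C : ℝ, 0 < C ∧ ∀ (N : ℕ) (k m : ℤ), 1 ≤ N →
      -(N:ℤ) ≤ k → k ≤ 0 → -(N:ℤ) ≤ m → m ≤ 0 → k ≠ m →
      eLpNorm
          (fun x : R2 =>
            (1 + (2:ℝ) ^ k * ‖x - center N k‖)⁻¹ *
              (1 + (2:ℝ) ^ m * ‖x - center N m‖)⁻¹) 4 volume
        ≤ ENNReal.ofReal
            (C * (2:ℝ) ^ (-(2 * (N:ℝ))) * (2:ℝ) ^ (-((k:ℝ) + (m:ℝ)) / 2)) := by
  classical
  set A : ℝ := Stmt6Aux.Ibase.toReal ^ ((4:ℝ)⁻¹) with hA_def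
  have hA : 0 ≤ A := Real.rpow_nonneg ENNReal.toReal_nonneg _
  refine ⟨8 * (A + 1), by positivity, ?_⟩
  intro N k m hN hk1 hk0 hm1 hm0 hkm
  set a2 : ℝ := (2:ℝ) ^ (2 - 2*(N:ℤ)) with ha2_def
  have ha2pos : 0 < a2 := by positivity
  have htk : (0:ℝ) < (2:ℝ)^k := by positivity
  have htm : (0:ℝ) < (2:ℝ)^m := by positivity
  -- distance between centers
  have hD : ‖center N k - center N m‖
      = |(2:ℝ)^(-k + 2*(N:ℤ)) - (2:ℝ)^(-m + 2*(N:ℤ))| := by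
    rw [center, center, abs_of_nonpos hk0, abs_of_nonpos hm0, ← sub_smul, norm_smul, e1,
      EuclideanSpace.norm_single]
    simp [Real.norm_eq_abs]
  have hboth : (2:ℝ)^(2*(N:ℤ)-1-k) ≤ ‖center N k - center N m‖ ∧
      (2:ℝ)^(2*(N:ℤ)-1-m) ≤ ‖center N k - center N m‖ := by
    rcases hkm.lt_or_gt with h | h
    · have hs := Stmt6Aux.zpow_sep (a := -k+2*(N:ℤ)) (b := -m+2*(N:ℤ)) (by omega)
      have h2 : (2:ℝ)^(-m+2*(N:ℤ)) ≤ (2:ℝ)^(-k+2*(N:ℤ)) :=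
        zpow_le_zpow_right₀ (by norm_num) (by omega)
      rw [hD, abs_of_nonneg (by linarith)]
      have hk' : (2:ℝ)^(2*(N:ℤ)-1-k) = (2:ℝ)^(-k+2*(N:ℤ)-1) := by congr 1; ring
      refine ⟨by rw [hk']; exact hs, ?_⟩
      have : (2:ℝ)^(2*(N:ℤ)-1-m) ≤ (2:ℝ)^(2*(N:ℤ)-1-k) :=
        zpow_le_zpow_right₀ (by norm_num) (by omega)
      rw [hk'] at this; linarith
    · have hs := Stmt6Aux.zpow_sep (a := -m+2*(N:ℤ)) (b := -k+2*(N:ℤ)) (by omega)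
      have h2 : (2:ℝ)^(-k+2*(N:ℤ)) ≤ (2:ℝ)^(-m+2*(N:ℤ)) :=
        zpow_le_zpow_right₀ (by norm_num) (by omega)
      rw [hD, abs_sub_comm, abs_of_nonneg (by linarith)]
      have hm' : (2:ℝ)^(2*(N:ℤ)-1-m) = (2:ℝ)^(-m+2*(N:ℤ)-1) := by congr 1; ring
      refine ⟨?_, by rw [hm']; exact hs⟩
      have : (2:ℝ)^(2*(N:ℤ)-1-k) ≤ (2:ℝ)^(2*(N:ℤ)-1-m) :=
        zpow_le_zpow_right₀ (by norm_num) (by omega)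
      rw [hm'] at this; linarith
  -- pointwise bound
  have hpt : ∀ x : R2,
      ‖(1 + (2:ℝ) ^ k * ‖x - center N k‖)⁻¹ * (1 + (2:ℝ) ^ m * ‖x - center N m‖)⁻¹‖
      ≤ a2 * ((1 + (2:ℝ) ^ k * ‖x - center N k‖)⁻¹ + (1 + (2:ℝ) ^ m * ‖x - center N m‖)⁻¹) := by
    intro x
    have hgk : (0:ℝ) < 1 + (2:ℝ)^k * ‖x - center N k‖ := by positivity
    have hgm : (0:ℝ) < 1 + (2:ℝ)^m * ‖x - center N m‖ := by positivity
    have hPk : (0:ℝ) < (1 + (2:ℝ)^k * ‖x - center N k‖)⁻¹ := by positivity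
    have hPm : (0:ℝ) < (1 + (2:ℝ)^m * ‖x - center N m‖)⁻¹ := by positivity
    rw [Real.norm_eq_abs, abs_of_nonneg (by positivity)]
    have htri : ‖center N k - center N m‖ ≤ ‖x - center N k‖ + ‖x - center N m‖ := by
      calc ‖center N k - center N m‖ = ‖(center N k - x) + (x - center N m)‖ := by
            rw [sub_add_sub_cancel]
        _ ≤ ‖center N k - x‖ + ‖x - center N m‖ := norm_add_le _ _
        _ = _ := by rw [norm_sub_rev]
    have hhalf : ∀ j : ℤ, (2:ℝ)^(2*(N:ℤ)-1-j) = 2 * (2:ℝ)^(2*(N:ℤ)-2-j) := by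
      intro j
      have h2 : (2:ℝ)^(2*(N:ℤ)-2-j) * 2 = (2:ℝ)^(2*(N:ℤ)-1-j) := by
        rw [← zpow_add_one₀ (by norm_num : (2:ℝ) ≠ 0)]
        congr 1; omega
      linarith
    have hmul : ∀ j : ℤ, (2:ℝ)^j * (2:ℝ)^(2*(N:ℤ)-2-j) = (2:ℝ)^(2*(N:ℤ)-2) := by
      intro j
      rw [← zpow_add₀ (by norm_num : (2:ℝ) ≠ 0)]
      congr 1; ring
    have ha2inv : ((2:ℝ)^(2*(N:ℤ)-2))⁻¹ = a2 := by
      rw [ha2_def, ← zpow_neg]; congr 1; ring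
    have hNpos : (0:ℝ) < (2:ℝ)^(2*(N:ℤ)-2) := by positivity
    rcases le_total (‖x - center N k‖) (‖x - center N m‖) with hc | hc
    · -- the far factor is the m one
      have hv : (2:ℝ)^(2*(N:ℤ)-2-m) ≤ ‖x - center N m‖ := by
        have := hboth.2
        rw [hhalf m] at this
        linarith
      have h1 : (2:ℝ)^(2*(N:ℤ)-2) ≤ 1 + (2:ℝ)^m * ‖x - center N m‖ := by
        have := mul_le_mul_of_nonneg_left hv htm.le
        rw [hmul m] at this
        linarith
      have hsmall : (1 + (2:ℝ)^m * ‖x - center N m‖)⁻¹ ≤ a2 := by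
        rw [← ha2inv]
        exact inv_anti₀ hNpos h1
      nlinarith [mul_le_mul_of_nonneg_left hsmall hPk.le]
    · have hv : (2:ℝ)^(2*(N:ℤ)-2-k) ≤ ‖x - center N k‖ := by
        have := hboth.1
        rw [hhalf k] at this
        linarith
      have h1 : (2:ℝ)^(2*(N:ℤ)-2) ≤ 1 + (2:ℝ)^k * ‖x - center N k‖ := by
        have := mul_le_mul_of_nonneg_left hv htk.le
        rw [hmul k] at this
        linarith
      have hsmall : (1 + (2:ℝ)^k * ‖x - center N k‖)⁻¹ ≤ a2 := by
        rw [← ha2inv]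
        exact inv_anti₀ hNpos h1
      nlinarith [mul_le_mul_of_nonneg_right hsmall hPm.le]
  -- continuity / measurability
  have hcontk : Continuous fun x : R2 => (1 + (2:ℝ)^k * ‖x - center N k‖)⁻¹ := by
    apply Continuous.inv₀ (by fun_prop)
    intro x
    have : (0:ℝ) < 1 + (2:ℝ)^k * ‖x - center N k‖ := by positivity
    exact this.ne'
  have hcontm : Continuous fun x : R2 => (1 + (2:ℝ)^m * ‖x - center N m‖)⁻¹ := by
    apply Continuous.inv₀ (by fun_prop)
    intro x
    have : (0:ℝ) < 1 + (2:ℝ)^m * ‖x - center N m‖ := by positivity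
    exact this.ne'
  -- chain of estimates
  have step1 := eLpNorm_mono_real (μ := volume) (p := (4:ENNReal)) hpt
  have step2 : eLpNorm (fun x : R2 => a2 * ((1 + (2:ℝ)^k * ‖x - center N k‖)⁻¹
        + (1 + (2:ℝ)^m * ‖x - center N m‖)⁻¹)) 4 volume
      = (‖a2‖₊ : ENNReal) * eLpNorm (fun x : R2 => (1 + (2:ℝ)^k * ‖x - center N k‖)⁻¹
        + (1 + (2:ℝ)^m * ‖x - center N m‖)⁻¹) 4 volume := by
    have := eLpNorm_const_smul (μ := volume) (p := (4:ENNReal)) a2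
      (fun x : R2 => (1 + (2:ℝ)^k * ‖x - center N k‖)⁻¹
        + (1 + (2:ℝ)^m * ‖x - center N m‖)⁻¹)
    exact this
  have step3 : eLpNorm (fun x : R2 => (1 + (2:ℝ)^k * ‖x - center N k‖)⁻¹
        + (1 + (2:ℝ)^m * ‖x - center N m‖)⁻¹) 4 volume
      ≤ eLpNorm (fun x : R2 => (1 + (2:ℝ)^k * ‖x - center N k‖)⁻¹) 4 volume
        + eLpNorm (fun x : R2 => (1 + (2:ℝ)^m * ‖x - center N m‖)⁻¹) 4 volume :=
    eLpNorm_add_le hcontk.aestronglyMeasurable hcontm.aestronglyMeasurable (by norm_num)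
  have ek := Stmt6Aux.elp_single (center N k) htk
  have em := Stmt6Aux.elp_single (center N m) htm
  have hIb := Stmt6Aux.Ibase_rpow_le
  -- numeric quantities
  have hnn : (‖a2‖₊ : ENNReal) = ENNReal.ofReal a2 := Real.enorm_eq_ofReal ha2pos.le
  calc eLpNorm (fun x : R2 => (1 + (2:ℝ) ^ k * ‖x - center N k‖)⁻¹ *
          (1 + (2:ℝ) ^ m * ‖x - center N m‖)⁻¹) 4 volume
      ≤ eLpNorm (fun x : R2 => a2 * ((1 + (2:ℝ)^k * ‖x - center N k‖)⁻¹
          + (1 + (2:ℝ)^m * ‖x - center N m‖)⁻¹)) 4 volume := step1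
    _ = (‖a2‖₊ : ENNReal) * eLpNorm (fun x : R2 => (1 + (2:ℝ)^k * ‖x - center N k‖)⁻¹
          + (1 + (2:ℝ)^m * ‖x - center N m‖)⁻¹) 4 volume := step2
    _ ≤ ENNReal.ofReal a2 * (ENNReal.ofReal (((2:ℝ)^k) ^ (-(2:ℝ)⁻¹)) * Stmt6Aux.Ibase ^ ((4:ℝ)⁻¹)
          + ENNReal.ofReal (((2:ℝ)^m) ^ (-(2:ℝ)⁻¹)) * Stmt6Aux.Ibase ^ ((4:ℝ)⁻¹)) := by
        rw [hnn]
        gcongr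
        exact step3.trans (by rw [ek, em])
    _ ≤ ENNReal.ofReal a2 * (ENNReal.ofReal (((2:ℝ)^k) ^ (-(2:ℝ)⁻¹)) * ENNReal.ofReal (A + 1)
          + ENNReal.ofReal (((2:ℝ)^m) ^ (-(2:ℝ)⁻¹)) * ENNReal.ofReal (A + 1)) := by
        gcongr
    _ = ENNReal.ofReal (a2 * (((2:ℝ)^k) ^ (-(2:ℝ)⁻¹) * (A + 1)
          + ((2:ℝ)^m) ^ (-(2:ℝ)⁻¹) * (A + 1))) := by
        rw [← ENNReal.ofReal_mul (by positivity), ← ENNReal.ofReal_mul (by positivity),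
          ← ENNReal.ofReal_add (by positivity) (by positivity),
          ← ENNReal.ofReal_mul ha2pos.le]
    _ ≤ ENNReal.ofReal (8 * (A + 1) * (2:ℝ) ^ (-(2 * (N:ℝ))) * (2:ℝ) ^ (-((k:ℝ) + (m:ℝ)) / 2)) := by
        apply ENNReal.ofReal_le_ofReal
        have hrp : ∀ j : ℤ, ((2:ℝ)^j) ^ (-(2:ℝ)⁻¹) = (2:ℝ) ^ (-(j:ℝ)/2) := by
          intro j
          rw [← Real.rpow_intCast 2 j, ← Real.rpow_mul (by norm_num)]
          congr 1; ring
        have ha2' : a2 = 4 * (2:ℝ) ^ (-(2*(N:ℝ))) := by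
          rw [ha2_def, ← Real.rpow_intCast 2 (2 - 2*(N:ℤ))]
          push_cast
          rw [show (2:ℝ) - 2*(N:ℝ) = 2 + (-(2*(N:ℝ))) by ring,
            Real.rpow_add (by norm_num : (0:ℝ) < 2)]
          norm_num
        have hP : (0:ℝ) < (2:ℝ) ^ (-((k:ℝ) + (m:ℝ)) / 2) := Real.rpow_pos_of_pos (by norm_num) _
        have hQ : (0:ℝ) < (2:ℝ) ^ (-(2*(N:ℝ))) := Real.rpow_pos_of_pos (by norm_num) _
        have hkR : (k:ℝ) ≤ 0 := by exact_mod_cast hk0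
        have hmR : (m:ℝ) ≤ 0 := by exact_mod_cast hm0
        have hk2 : (2:ℝ) ^ (-(k:ℝ)/2) ≤ (2:ℝ) ^ (-((k:ℝ) + (m:ℝ)) / 2) := by
          apply Real.rpow_le_rpow_left_iff (by norm_num : (1:ℝ) < 2) |>.mpr
          linarith
        have hm2 : (2:ℝ) ^ (-(m:ℝ)/2) ≤ (2:ℝ) ^ (-((k:ℝ) + (m:ℝ)) / 2) := by
          apply Real.rpow_le_rpow_left_iff (by norm_num : (1:ℝ) < 2) |>.mpr
          linarith
        rw [hrp k, hrp m, ha2']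
        nlinarith [mul_le_mul_of_nonneg_right hk2 (by positivity : (0:ℝ) ≤ A + 1),
          mul_le_mul_of_nonneg_right hm2 (by positivity : (0:ℝ) ≤ A + 1), hQ.le,
          mul_le_mul_of_nonneg_left (add_le_add
            (mul_le_mul_of_nonneg_right hk2 (by positivity : (0:ℝ) ≤ A + 1))
            (mul_le_mul_of_nonneg_right hm2 (by positivity : (0:ℝ) ≤ A + 1))) hQ.le]
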